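/- Let ν_I > 0 and T > 0. Suppose I : [0,T] × D_ε → ℝ is continuous and satisfies I(t,x) = I(0,x) + ∫₀ᵗ g(s,x)ds + ν_I ∫₀ᵗ Δ_ε I(s,·)(x)ds for all (t,x), where g : [0,T] × D_ε → ℝ is measurable with g(s,x) ≥ 0. If u₀ : D_ε → ℝ satisfies 0 ≤ u₀(x) ≤ I(0,x) for all x, then I(t,x) ≥ (e^{tν_IΔ_ε} u₀)(x) for all t ∈ [0,T] and x ∈ D_ε. -/

import Mathlib

/-!
Since `g ≥ 0`, the source term `t ↦ ∫₀ᵗ g` is nondecreasing. This holds even when `g` is not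
integrable: the integral identity for `I` makes the source term continuous, and a continuous
`toReal` of a monotone `ℝ≥0∞`-valued function is monotone. So `I` is an integral supersolution of
`∂ₜ = ν_I Δ_ε`, while `v(t) = e^{tν_IΔ_ε} u₀` is a solution. Their difference `w` obeys a minimum
principle: at a spatial minimum `Δ_ε w ≥ 0`, so `w + δ t` cannot leave `[0, ∞)`, and `δ → 0`
gives `w ≥ 0`.
-/

open MeasureTheory Set

abbrev Grid (d n : ℕ) := Fin d → ZMod n

/-- Discrete Laplacian on the grid of mesh `ε = 1/n` (the factor `(n:ℝ)^2` is `ε⁻²`). -/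
noncomputable def discLap (d n : ℕ) (f : Grid d n → ℝ) (x : Grid d n) : ℝ :=
  (n : ℝ) ^ 2 * ∑ i : Fin d,
    (f (Function.update x i (x i + 1)) - 2 * f x + f (Function.update x i (x i - 1)))

/-- Matrix of the discrete Laplacian (a symmetric matrix indexed by the grid). -/
noncomputable def lapMat (d n : ℕ) [NeZero n] : Matrix (Grid d n) (Grid d n) ℝ :=
  Matrix.of fun x y => discLap d n (fun z => if z = y then 1 else 0) x

open Filter Topology
open scoped ENNReal Matrix

theorem monotoneOn_toReal_of_continuousOn {α : Type*} [ConditionallyCompleteLinearOrder α]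
    [TopologicalSpace α] [OrderTopology α] [DenselyOrdered α] {Φ : α → ℝ≥0∞}
    (hΦ : Monotone Φ) {a b : α} (hcont : ContinuousOn (fun t => (Φ t).toReal) (Icc a b)) :
    MonotoneOn (fun t => (Φ t).toReal) (Icc a b) := by
  intro s hs t ht hst
  rcases (ENNReal.toReal_nonneg (a := Φ s)).eq_or_lt with hzero | hpos
  · exact hzero.symm.trans_le ENNReal.toReal_nonneg
  suffices Icc s t ⊆ {r | (Φ s).toReal ≤ (Φ r).toReal} from this ⟨hst, le_rfl⟩
  refine IsClosed.Icc_subset_of_forall_mem_nhdsWithin ?_ (le_refl (Φ s).toReal) ?_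
  · rw [inter_comm]
    exact (hcont.mono (Icc_subset_Icc hs.1 ht.2)).preimage_isClosed_of_isClosed isClosed_Icc
      isClosed_Ici
  · rintro r ⟨hr, hsr, hrt⟩
    have hpos' : ∀ᶠ r' in 𝓝[>] r, 0 < (Φ r').toReal :=
      ((hcont r ⟨hs.1.trans hsr, hrt.le.trans ht.2⟩).mono_of_mem_nhdsWithin
        (Icc_mem_nhdsGT_of_mem ⟨hs.1.trans hsr, hrt.trans_le ht.2⟩)).eventually
        (lt_mem_nhds (hpos.trans_le hr))
    filter_upwards [hpos', self_mem_nhdsWithin] with r' hr' hrr'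
    exact hr.trans (ENNReal.toReal_mono (ENNReal.toReal_pos_iff.1 hr').2.ne (hΦ hrr'.le))

theorem monotoneOn_intervalIntegral_of_nonneg {f : ℝ → ℝ} {a b : ℝ}
    (hf : AEStronglyMeasurable f) (hnonneg : ∀ s ∈ Icc a b, 0 ≤ f s)
    (hcont : ContinuousOn (fun t => ∫ s in a..t, f s) (Icc a b)) :
    MonotoneOn (fun t => ∫ s in a..t, f s) (Icc a b) := by
  have hlint : EqOn (fun t => ∫ s in a..t, f s)
      (fun t => (∫⁻ s in Ioc a t, ENNReal.ofReal (f s)).toReal) (Icc a b) := by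
    intro t ht
    dsimp only
    rw [intervalIntegral.integral_of_le ht.1]
    refine integral_eq_lintegral_of_nonneg_ae ?_ hf.restrict
    exact (ae_restrict_iff' measurableSet_Ioc).2 (ae_of_all _ fun s hs =>
      hnonneg s ⟨hs.1.le, hs.2.trans ht.2⟩)
  refine (monotoneOn_toReal_of_continuousOn (fun t t' htt' => ?_) (hcont.congr hlint.symm)).congr
    hlint.symm
  exact lintegral_mono_set (Ioc_subset_Ioc_right htt')

theorem eventually_mul_sub_le_integral {φ : ℝ → ℝ} {a b t c : ℝ} (hφ : ContinuousOn φ (Icc a b))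
    (ht : t ∈ Ico a b) (hc : c < φ t) :
    ∀ᶠ t' in 𝓝[>] t, c * (t' - t) ≤ ∫ r in t..t', φ r := by
  have hmem : Icc a b ∈ 𝓝[≥] t := Icc_mem_nhdsGE_of_mem ht
  have hnear : ∀ᶠ r in 𝓝[≥] t, r ∈ Icc a b ∧ c < φ r :=
    (eventually_mem_set.2 hmem).and
      (((hφ t (Ico_subset_Icc_self ht)).mono_of_mem_nhdsWithin hmem).eventually (lt_mem_nhds hc))
  obtain ⟨u, htu, hsub⟩ := mem_nhdsGE_iff_exists_Ico_subset.1 hnear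
  filter_upwards [Ioo_mem_nhdsGT htu] with t' ht'
  have hIcc : Icc t t' ⊆ Icc a b ∩ {r | c < φ r} := fun r hr => hsub ⟨hr.1, hr.2.trans_lt ht'.2⟩
  calc c * (t' - t) = ∫ _ in t..t', c := by simp [mul_comm]
    _ ≤ ∫ r in t..t', φ r :=
      intervalIntegral.integral_mono_on ht'.1.le intervalIntegrable_const
        ((hφ.mono fun r hr => (hIcc hr).1).intervalIntegrable_of_Icc ht'.1.le)
        fun r hr => (hIcc hr).2.le

theorem nonneg_of_integral_supersolution {N : Type*} [Finite N] {w ψ : ℝ → N → ℝ} {a b : ℝ}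
    (hw : ∀ x, ContinuousOn (fun t => w t x) (Icc a b))
    (hψ : ∀ x, ContinuousOn (fun t => ψ t x) (Icc a b))
    (hψ_nonneg : ∀ t ∈ Icc a b, ∀ x, (∀ y, w t x ≤ w t y) → 0 ≤ ψ t x)
    (hsuper : ∀ x, ∀ s ∈ Icc a b, ∀ t ∈ Icc a b, s ≤ t → ∫ r in s..t, ψ r x ≤ w t x - w s x)
    (ha : ∀ x, 0 ≤ w a x) : ∀ t ∈ Icc a b, ∀ x, 0 ≤ w t x := by
  have hδ : ∀ δ > 0, Icc a b ⊆ {t | ∀ x, 0 ≤ w t x + δ * (t - a)} := by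
    intro δ hδ
    have hcont : ∀ x, ContinuousOn (fun t => w t x + δ * (t - a)) (Icc a b) := fun x =>
      (hw x).add (continuousOn_const.mul (continuousOn_id.sub continuousOn_const))
    refine IsClosed.Icc_subset_of_forall_mem_nhdsWithin ?_ (by simpa using ha) ?_
    · rw [inter_comm]
      exact (continuousOn_pi.2 hcont).preimage_isClosed_of_isClosed isClosed_Icc
        (isClosed_Ici (a := 0))
    · rintro t ⟨ht, hat, htb⟩
      refine eventually_all.2 fun x => ?_
      rcases (ht x).lt_or_eq with hlt | heq
      · filter_upwards [((hcont x t ⟨hat, htb.le⟩).mono_of_mem_nhdsWithin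
          (Icc_mem_nhdsGT_of_mem ⟨hat, htb⟩)).eventually (lt_mem_nhds hlt)] with t' ht'
        exact ht'.le
      · -- `x` minimises `w t`, so `ψ t x ≥ 0 > -δ`, and `w · x` cannot fall faster than `δ`.
        have hmin : ∀ y, w t x ≤ w t y := fun y => by linarith [ht y]
        filter_upwards [eventually_mul_sub_le_integral (hψ x) ⟨hat, htb⟩
          ((neg_neg_of_pos hδ).trans_le (hψ_nonneg t ⟨hat, htb.le⟩ x hmin)),
          Ioo_mem_nhdsGT htb] with t' hint ht'
        have := hsuper x t ⟨hat, htb.le⟩ t' ⟨hat.trans ht'.1.le, ht'.2.le⟩ ht'.1.le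
        linarith
  intro t ht x
  have hlim : Tendsto (fun δ : ℝ => w t x + δ * (t - a)) (𝓝[>] 0) (𝓝 (w t x)) :=
    tendsto_nhdsWithin_of_tendsto_nhds
      ((continuous_const.add (continuous_id.mul continuous_const)).tendsto' _ _ (by simp))
  exact ge_of_tendsto hlim (eventually_nhdsWithin_of_forall fun δ hδ' => hδ δ hδ' ht x)

theorem continuousOn_primitive_of_continuousOn {φ : ℝ → ℝ} {a b : ℝ}
    (hφ : ContinuousOn φ (Icc a b)) : ContinuousOn (fun t => ∫ r in a..t, φ r) (Icc a b) :=
  (intervalIntegral.continuousOn_primitive (hφ.integrableOn_Icc)).congr fun _ ht =>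
    intervalIntegral.integral_of_le ht.1

theorem integral_le_sub_of_eq_add_monotoneOn {F G φ : ℝ → ℝ} {a b : ℝ}
    (hφ : ContinuousOn φ (Icc a b)) (hG : MonotoneOn G (Icc a b))
    (hF : ∀ t ∈ Icc a b, F t = F a + G t + ∫ r in a..t, φ r) :
    ∀ s ∈ Icc a b, ∀ t ∈ Icc a b, s ≤ t → ∫ r in s..t, φ r ≤ F t - F s := by
  intro s hs t ht hst
  have hint : ∀ u ∈ Icc a b, IntervalIntegrable φ volume a u := fun u hu =>
    (hφ.mono (Icc_subset_Icc_right hu.2)).intervalIntegrable_of_Icc hu.1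
  rw [← intervalIntegral.integral_interval_sub_left (hint t ht) (hint s hs), hF t ht, hF s hs]
  linarith [hG hs ht hst]

theorem integral_le_sub_of_eq_add_integral_nonneg {F g φ : ℝ → ℝ} {a b : ℝ}
    (hF : ContinuousOn F (Icc a b)) (hφ : ContinuousOn φ (Icc a b))
    (hg : AEStronglyMeasurable g) (hg_nonneg : ∀ s ∈ Icc a b, 0 ≤ g s)
    (hFeq : ∀ t ∈ Icc a b, F t = F a + (∫ r in a..t, g r) + ∫ r in a..t, φ r) :
    ∀ s ∈ Icc a b, ∀ t ∈ Icc a b, s ≤ t → ∫ r in s..t, φ r ≤ F t - F s := by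
  refine integral_le_sub_of_eq_add_monotoneOn hφ
    (monotoneOn_intervalIntegral_of_nonneg hg hg_nonneg ?_) hFeq
  refine ((hF.sub (continuousOn_const (c := F a))).sub
    (continuousOn_primitive_of_continuousOn hφ)).congr fun t ht => ?_
  simp only [Pi.sub_apply]
  linarith [hFeq t ht]

theorem hasDerivAt_exp_smul_mulVec {N : Type*} [Fintype N] [DecidableEq N] (A : Matrix N N ℝ)
    (u : N → ℝ) (t : ℝ) :
    HasDerivAt (fun r : ℝ => NormedSpace.exp (r • A) *ᵥ u)
      (A *ᵥ (NormedSpace.exp (t • A) *ᵥ u)) t := by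
  let : NormedRing (Matrix N N ℝ) := Matrix.linftyOpNormedRing
  let : NormedAlgebra ℝ (Matrix N N ℝ) := Matrix.linftyOpNormedAlgebra
  rw [Matrix.mulVec_mulVec]
  exact (LinearMap.toContinuousLinearMap
    ((LinearMap.applyₗ u).comp (Matrix.toLin' (R := ℝ)).toLinearMap)).hasFDerivAt.comp_hasDerivAt
      t (hasDerivAt_exp_smul_const' A t)

variable {d n : ℕ}

theorem lapMat_mulVec [NeZero n] (f : Grid d n → ℝ) : lapMat d n *ᵥ f = discLap d n f := by
  ext x
  simp only [Matrix.mulVec, dotProduct, lapMat, Matrix.of_apply, discLap, mul_assoc,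
    Finset.sum_mul]
  rw [← Finset.mul_sum, Finset.sum_comm]
  congr 1
  refine Finset.sum_congr rfl fun i _ => ?_
  simp [sub_mul, add_mul, Finset.sum_add_distrib, Finset.sum_sub_distrib]

theorem discLap_sub (f g : Grid d n → ℝ) (x : Grid d n) :
    discLap d n (f - g) x = discLap d n f x - discLap d n g x := by
  simp only [discLap, Pi.sub_apply, ← mul_sub, ← Finset.sum_sub_distrib]
  congr 1
  refine Finset.sum_congr rfl fun i _ => ?_
  ring

theorem discLap_nonneg_of_forall_le {f : Grid d n → ℝ} {x : Grid d n} (h : ∀ y, f x ≤ f y) :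
    0 ≤ discLap d n f x := by
  refine mul_nonneg (sq_nonneg _) (Finset.sum_nonneg fun i _ => ?_)
  linarith [h (Function.update x i (x i + 1)), h (Function.update x i (x i - 1))]

theorem continuousOn_discLap {f : ℝ → Grid d n → ℝ} {s : Set ℝ}
    (hf : ∀ x, ContinuousOn (fun t => f t x) s) (x : Grid d n) :
    ContinuousOn (fun t => discLap d n (f t) x) s :=
  continuousOn_const.mul <| continuousOn_finsetSum _ fun _ _ =>
    ((hf _).sub (continuousOn_const.mul (hf x))).add (hf _)

theorem hasDerivAt_exp_smul_lapMat_mulVec [NeZero n] (ν : ℝ) (u : Grid d n → ℝ) (x : Grid d n)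
    (t : ℝ) :
    HasDerivAt (fun r => (NormedSpace.exp (r • ν • lapMat d n) *ᵥ u) x)
      (ν * discLap d n (NormedSpace.exp (t • ν • lapMat d n) *ᵥ u) x) t := by
  simpa [Matrix.smul_mulVec, ← Matrix.mulVec_mulVec, lapMat_mulVec] using
    hasDerivAt_pi.1 (hasDerivAt_exp_smul_mulVec (ν • lapMat d n) u t) x

theorem continuous_exp_smul_lapMat_mulVec [NeZero n] (ν : ℝ) (u : Grid d n → ℝ)
    (x : Grid d n) : Continuous fun r : ℝ => (NormedSpace.exp (r • ν • lapMat d n) *ᵥ u) x :=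
  continuous_iff_continuousAt.2 fun r => (hasDerivAt_exp_smul_lapMat_mulVec ν u x r).continuousAt

theorem integral_discLap_exp_mulVec [NeZero n] (ν : ℝ) (u : Grid d n → ℝ) (x : Grid d n)
    (s t : ℝ) :
    ∫ r in s..t, ν * discLap d n (NormedSpace.exp (r • ν • lapMat d n) *ᵥ u) x
      = (NormedSpace.exp (t • ν • lapMat d n) *ᵥ u) x
        - (NormedSpace.exp (s • ν • lapMat d n) *ᵥ u) x :=
  intervalIntegral.integral_eq_sub_of_hasDerivAt
    (fun r _ => hasDerivAt_exp_smul_lapMat_mulVec ν u x r)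
    (continuousOn_const.mul (continuousOn_discLap
      (fun y => (continuous_exp_smul_lapMat_mulVec ν u y).continuousOn) x)).intervalIntegrable

theorem exp_smul_lapMat_mulVec_le_of_integral_supersolution [NeZero n] {ν T : ℝ} (hν : 0 ≤ ν)
    {I : ℝ → Grid d n → ℝ} (hI : ∀ x, ContinuousOn (fun t => I t x) (Icc 0 T))
    (hsuper : ∀ x, ∀ s ∈ Icc 0 T, ∀ t ∈ Icc 0 T, s ≤ t →
      ∫ r in s..t, ν * discLap d n (I r) x ≤ I t x - I s x)
    {u : Grid d n → ℝ} (hu : ∀ x, u x ≤ I 0 x) :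
    ∀ t ∈ Icc 0 T, ∀ x, (NormedSpace.exp (t • ν • lapMat d n) *ᵥ u) x ≤ I t x := by
  set v : ℝ → Grid d n → ℝ := fun t => NormedSpace.exp (t • ν • lapMat d n) *ᵥ u
  have hv : ∀ x, ContinuousOn (fun t => v t x) (Icc 0 T) := fun x =>
    (continuous_exp_smul_lapMat_mulVec ν u x).continuousOn
  have hLI : ∀ x, ContinuousOn (fun t => ν * discLap d n (I t) x) (Icc 0 T) := fun x =>
    continuousOn_const.mul (continuousOn_discLap hI x)
  have hLv : ∀ x, ContinuousOn (fun t => ν * discLap d n (v t) x) (Icc 0 T) := fun x =>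
    continuousOn_const.mul (continuousOn_discLap hv x)
  refine fun t ht x => sub_nonneg.1 <| nonneg_of_integral_supersolution (w := fun t => I t - v t)
    (ψ := fun t x => ν * discLap d n (I t) x - ν * discLap d n (v t) x)
    (fun x => (hI x).sub (hv x)) (fun x => (hLI x).sub (hLv x)) ?_ ?_ ?_ t ht x
  · intro t _ x hmin
    rw [← mul_sub, ← discLap_sub]
    exact mul_nonneg hν (discLap_nonneg_of_forall_le hmin)
  · intro x s hs t ht hst
    have hint : ∀ {F : ℝ → ℝ}, ContinuousOn F (Icc 0 T) → IntervalIntegrable F volume s t :=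
      fun hF => (hF.mono (Icc_subset_Icc hs.1 ht.2)).intervalIntegrable_of_Icc hst
    have hvsol : ∫ r in s..t, ν * discLap d n (v r) x = v t x - v s x :=
      integral_discLap_exp_mulVec ν u x s t
    rw [intervalIntegral.integral_sub (hint (hLI x)) (hint (hLv x)), hvsol]
    simp only [Pi.sub_apply]
    linarith [hsuper x s hs t ht hst]
  · intro x
    simp only [Pi.sub_apply, v, zero_smul, NormedSpace.exp_zero, Matrix.one_mulVec, sub_nonneg]
    exact hu x

theorem infected_heat_comparison_general
    (d : ℕ) (n : ℕ) [NeZero n] (νI T : ℝ)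
    (hνI : 0 < νI)
    (I : ℝ → Grid d n → ℝ) (g : ℝ → Grid d n → ℝ)
    (hIcont : ∀ x, ContinuousOn (fun t => I t x) (Icc 0 T))
    (hgmeas : ∀ x, Measurable fun s => g s x)
    (hg : ∀ s ∈ Icc (0:ℝ) T, ∀ x, 0 ≤ g s x)
    (heq : ∀ t ∈ Icc (0:ℝ) T, ∀ x,
      I t x = I 0 x + (∫ s in (0:ℝ)..t, g s x)
        + νI * ∫ s in (0:ℝ)..t, discLap d n (I s) x)
    (u₀ : Grid d n → ℝ) (hu₀ : ∀ x, 0 ≤ u₀ x ∧ u₀ x ≤ I 0 x) :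
    ∀ t ∈ Icc (0:ℝ) T, ∀ x,
      (NormedSpace.exp (t • νI • lapMat d n)).mulVec u₀ x ≤ I t x := by
  refine exp_smul_lapMat_mulVec_le_of_integral_supersolution hνI.le hIcont (fun x => ?_)
    fun x => (hu₀ x).2
  refine integral_le_sub_of_eq_add_integral_nonneg (hIcont x)
    (continuousOn_const.mul (continuousOn_discLap hIcont x)) (hgmeas x).aestronglyMeasurable
    (fun s hs => hg s hs x) fun t ht => ?_
  rw [intervalIntegral.integral_const_mul]
  exact heq t ht x

/-- comparison principle for the infected equation: if the source term `g`
is nonnegative and `0 ≤ u₀ ≤ I(0,·)`, then `I(t,·) ≥ e^{tν_IΔ_ε} u₀` on `[0,T]`. -/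
theorem infected_heat_comparison
    (d : ℕ) (hd : 1 ≤ d) (n : ℕ) [NeZero n] (νI T : ℝ)
    (hνI : 0 < νI) (hT : 0 < T)
    (I : ℝ → Grid d n → ℝ) (g : ℝ → Grid d n → ℝ)
    (hIcont : ∀ x, ContinuousOn (fun t => I t x) (Icc 0 T))
    (hgmeas : ∀ x, Measurable fun s => g s x)
    (hg : ∀ s ∈ Icc (0:ℝ) T, ∀ x, 0 ≤ g s x)
    (heq : ∀ t ∈ Icc (0:ℝ) T, ∀ x,
      I t x = I 0 x + (∫ s in (0:ℝ)..t, g s x)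
        + νI * ∫ s in (0:ℝ)..t, discLap d n (I s) x)
    (u₀ : Grid d n → ℝ) (hu₀ : ∀ x, 0 ≤ u₀ x ∧ u₀ x ≤ I 0 x) :
    ∀ t ∈ Icc (0:ℝ) T, ∀ x,
      (NormedSpace.exp (t • νI • lapMat d n)).mulVec u₀ x ≤ I t x :=
  infected_heat_comparison_general d n νI T hνI I g hIcont hgmeas hg heq u₀ hu₀
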